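/- arXiv:2009.00371 — 8 statements merged into one kernel-verified Lean document; each statement's English description precedes it below -/
import Mathlib

section
/- Let A be an n×n real matrix of rank r > 0, and let Q = [Q₁ Q₂] be an orthogonal matrix whose first r columns Q₁ form an orthonormal basis of the range R(A) and whose last n−r columns Q₂ form an orthonormal basis of R(A)ᗮ. Let A₁₁ = Q₁ᵀ A Q₁. Then A₁₁ is nonsingular if and only if R(A) ∩ N(A) = {0}, where N(A) is the null space of A. -/
open Matrix

theorem stmt0 (n r : ℕ) (hr : 0 < r)
    (A : Matrix (Fin n) (Fin n) ℝ) (hrank : A.rank = r)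
    (Q1 : Matrix (Fin n) (Fin r) ℝ) (Q2 : Matrix (Fin n) (Fin (n - r)) ℝ)
    (hQ1 : Q1ᵀ * Q1 = 1) (hQ2 : Q2ᵀ * Q2 = 1) (hQ12 : Q1ᵀ * Q2 = 0)
    (hQfull : Q1 * Q1ᵀ + Q2 * Q2ᵀ = 1)
    (hR : LinearMap.range A.mulVecLin = LinearMap.range Q1.mulVecLin) :
    IsUnit (Q1ᵀ * A * Q1) ↔
      LinearMap.range A.mulVecLin ⊓ LinearMap.ker A.mulVecLin = ⊥ := by
  -- key: injectivity characterizations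
  have hQinj : ∀ x : Fin r → ℝ, Q1 *ᵥ x = 0 → x = 0 := by
    intro x hx
    have : Q1ᵀ *ᵥ (Q1 *ᵥ x) = 0 := by rw [hx, Matrix.mulVec_zero]
    rwa [Matrix.mulVec_mulVec, hQ1, Matrix.one_mulVec] at this
  -- v ∈ range Q1 and Q1ᵀ v = 0 → v = 0
  have hQker : ∀ v : Fin n → ℝ, (∃ y, Q1 *ᵥ y = v) → Q1ᵀ *ᵥ v = 0 → v = 0 := by
    rintro v ⟨y, rfl⟩ hv
    rw [Matrix.mulVec_mulVec, hQ1, Matrix.one_mulVec] at hv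
    rw [hv, Matrix.mulVec_zero]
  rw [Matrix.isUnit_iff_isUnit_det, isUnit_iff_ne_zero, Ne,
      ← Matrix.exists_mulVec_eq_zero_iff, Submodule.eq_bot_iff]
  push_neg
  constructor
  · intro h v hv
    obtain ⟨hvR, hvK⟩ := Submodule.mem_inf.mp hv
    rw [hR] at hvR
    obtain ⟨x, hx⟩ := hvR
    simp only [Matrix.mulVecLin_apply] at hx
    have hAv : A *ᵥ v = 0 := hvK
    have : (Q1ᵀ * A * Q1) *ᵥ x = 0 := by
      rw [← Matrix.mulVec_mulVec, ← Matrix.mulVec_mulVec, hx, hAv, Matrix.mulVec_zero]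
    by_contra hv0
    have hx0 : x ≠ 0 := fun h0 => hv0 (by rw [← hx, h0, Matrix.mulVec_zero])
    exact h x hx0 this
  · intro h x hx0 hx
    -- A *ᵥ (Q1 *ᵥ x) ∈ range A = range Q1, and Q1ᵀ of it is 0
    have hmem : A *ᵥ (Q1 *ᵥ x) ∈ LinearMap.range A.mulVecLin :=
      ⟨Q1 *ᵥ x, by simp [Matrix.mulVecLin_apply]⟩
    have hmem' := hmem
    rw [hR] at hmem'
    obtain ⟨y, hy⟩ := hmem'
    simp only [Matrix.mulVecLin_apply] at hy
    have hQtA : Q1ᵀ *ᵥ (A *ᵥ (Q1 *ᵥ x)) = 0 := by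
      rw [Matrix.mulVec_mulVec, Matrix.mulVec_mulVec]
      exact hx
    have hAQ1x : A *ᵥ (Q1 *ᵥ x) = 0 := hQker _ ⟨y, hy⟩ hQtA
    -- so Q1 *ᵥ x ∈ range A ⊓ ker A
    have hmem2 : Q1 *ᵥ x ∈ LinearMap.range A.mulVecLin ⊓ LinearMap.ker A.mulVecLin := by
      refine Submodule.mem_inf.mpr ⟨?_, ?_⟩
      · rw [hR]; exact ⟨x, by simp [Matrix.mulVecLin_apply]⟩
      · exact hAQ1x
    exact hx0 (hQinj x (h _ hmem2))
end

section
/- With the same setup, let A₁₂ = Q₁ᵀ A Q₂. If A₁₂ = 0, then A₁₁ = Q₁ᵀ A Q₁ is nonsingular. -/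
open Matrix

theorem stmt1 (n r : ℕ) (hr : 0 < r)
    (A : Matrix (Fin n) (Fin n) ℝ) (hrank : A.rank = r)
    (Q1 : Matrix (Fin n) (Fin r) ℝ) (Q2 : Matrix (Fin n) (Fin (n - r)) ℝ)
    (hQ1 : Q1ᵀ * Q1 = 1) (hQ2 : Q2ᵀ * Q2 = 1) (hQ12 : Q1ᵀ * Q2 = 0)
    (hQfull : Q1 * Q1ᵀ + Q2 * Q2ᵀ = 1)
    (hR : LinearMap.range A.mulVecLin = LinearMap.range Q1.mulVecLin)
    (hA12 : Q1ᵀ * A * Q2 = 0) :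
    IsUnit (Q1ᵀ * A * Q1) := by
  -- key: (Q1ᵀ * A * Q1) * Q1ᵀ = Q1ᵀ * A
  have hkey : Q1ᵀ * A * Q1 * Q1ᵀ = Q1ᵀ * A := by
    have h1 : Q1 * Q1ᵀ = 1 - Q2 * Q2ᵀ := eq_sub_of_add_eq hQfull
    rw [Matrix.mul_assoc (Q1ᵀ * A) Q1 Q1ᵀ, h1, Matrix.mul_sub, Matrix.mul_one,
      ← Matrix.mul_assoc (Q1ᵀ * A) Q2 Q2ᵀ, hA12, Matrix.zero_mul, sub_zero]
  rw [← Matrix.mulVec_surjective_iff_isUnit]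
  intro y
  have hy : Q1.mulVecLin y ∈ LinearMap.range A.mulVecLin := by
    rw [hR]; exact ⟨y, rfl⟩
  obtain ⟨x, hx⟩ := hy
  refine ⟨Q1ᵀ.mulVec x, ?_⟩
  have hx' : A.mulVec x = Q1.mulVec y := hx
  rw [Matrix.mulVec_mulVec, hkey, ← Matrix.mulVec_mulVec, hx',
    Matrix.mulVec_mulVec, hQ1, Matrix.one_mulVec]
end

section
/- Let v₁,…,v_j ∈ ℝⁿ be orthonormal vectors, and Q₂ ∈ ℝ^{n×(n−r)} have orthonormal columns. Suppose each Q₂ᵀv_i = c_i w for a fixed vector w ∈ ℝ^{n−r} and scalars c_i, with w ≠ 0 and c₁ ≠ 0. Let v_i¹ = Q₁ᵀv_i where [Q₁ Q₂] is orthogonal. Then rank [v₁¹, …, v_j¹] is either j−1 or j. -/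
open Matrix

theorem stmt7 (n r j : ℕ) (hj : 0 < j)
    (Q1 : Matrix (Fin n) (Fin r) ℝ) (Q2 : Matrix (Fin n) (Fin (n - r)) ℝ)
    (hQ1 : Q1ᵀ * Q1 = 1) (hQ2 : Q2ᵀ * Q2 = 1) (hQ12 : Q1ᵀ * Q2 = 0)
    (hQfull : Q1 * Q1ᵀ + Q2 * Q2ᵀ = 1)
    (v : Fin j → Fin n → ℝ)
    (horth : ∀ i k, v i ⬝ᵥ v k = if i = k then 1 else 0)
    (w : Fin (n - r) → ℝ) (hw : w ≠ 0) (c : Fin j → ℝ)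
    (hpar : ∀ i, Q2ᵀ.mulVec (v i) = c i • w)
    (hc1 : c ⟨0, hj⟩ ≠ 0) :
    (Matrix.of fun a i => Q1ᵀ.mulVec (v i) a).rank = j - 1 ∨
    (Matrix.of fun a i => Q1ᵀ.mulVec (v i) a).rank = j := by
  set M : Matrix (Fin r) (Fin j) ℝ := Matrix.of fun a i => Q1ᵀ.mulVec (v i) a with hM
  have hle : M.rank ≤ j := by
    simpa using M.rank_le_card_width
  set d : Fin j → ℝ := fun k => v k ⬝ᵥ Q2.mulVec w with hd
  have hker : LinearMap.ker M.mulVecLin ≤ Submodule.span ℝ {d} := by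
    intro x hx
    have hx0 : M.mulVec x = 0 := hx
    set u : Fin n → ℝ := ∑ i, x i • v i with hu
    have hu1 : ∀ a, u a = ∑ i, x i * v i a := by
      intro a; simp [hu, Finset.sum_apply]
    have h1 : Q1ᵀ.mulVec u = 0 := by
      ext a
      have h := congrFun hx0 a
      simp only [Matrix.mulVec, dotProduct, hM, Matrix.of_apply, Matrix.transpose_apply,
        Pi.zero_apply] at h ⊢
      calc ∑ b, Q1 b a * u b
          = ∑ i, (∑ b, Q1 b a * v i b) * x i := by
            simp only [hu1, Finset.mul_sum]
            rw [Finset.sum_comm]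
            refine Finset.sum_congr rfl fun i _ => ?_
            rw [Finset.sum_mul]
            exact Finset.sum_congr rfl fun b _ => by ring
        _ = 0 := h
    have h2 : Q2ᵀ.mulVec u = (∑ i, x i * c i) • w := by
      have hs : Q2ᵀ.mulVec u = ∑ i, x i • Q2ᵀ.mulVec (v i) := by
        rw [hu, show (Q2ᵀ.mulVec (∑ i, x i • v i)) = Q2ᵀ.mulVecLin (∑ i, x i • v i) from rfl,
          map_sum]
        exact Finset.sum_congr rfl fun i _ => by rw [_root_.map_smul]; rfl
      rw [hs]
      simp only [hpar, smul_smul]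
      rw [← Finset.sum_smul]
    have h3 : u = (∑ i, x i * c i) • Q2.mulVec w := by
      have h1' : (1 : Matrix (Fin n) (Fin n) ℝ).mulVec u = u := by simp
      rw [← hQfull] at h1'
      rw [Matrix.add_mulVec, ← Matrix.mulVec_mulVec, ← Matrix.mulVec_mulVec, h1, h2] at h1'
      simpa [Matrix.mulVec_smul] using h1'.symm
    have h4 : x = (∑ i, x i * c i) • d := by
      funext k
      have hxk : v k ⬝ᵥ u = x k := by
        simp only [dotProduct, hu1, Finset.mul_sum]
        rw [Finset.sum_comm]
        calc ∑ i, ∑ b, v k b * (x i * v i b)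
            = ∑ i, x i * (v k ⬝ᵥ v i) := by
              refine Finset.sum_congr rfl fun i _ => ?_
              simp only [dotProduct, Finset.mul_sum]
              exact Finset.sum_congr rfl fun b _ => by ring
          _ = x k := by simp [horth]
      rw [h3] at hxk
      simp only [Pi.smul_apply, smul_eq_mul, hd]
      rw [← hxk, dotProduct_smul, smul_eq_mul]
    rw [h4]
    exact Submodule.smul_mem _ _ (Submodule.mem_span_singleton_self d)
  have hkd : Module.finrank ℝ (LinearMap.ker M.mulVecLin) ≤ 1 := by
    refine le_trans (Submodule.finrank_mono hker) ?_
    by_cases hd0 : d = 0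
    · rw [hd0, Submodule.span_zero_singleton]
      simp
    · exact le_of_eq (finrank_span_singleton hd0)
  have hrn : M.rank + Module.finrank ℝ (LinearMap.ker M.mulVecLin) = j := by
    have := LinearMap.finrank_range_add_finrank_ker M.mulVecLin
    simpa [Matrix.rank] using this
  omega
end

section
/- With H_j partitioned as above (H₂₁ nonsingular), for given β ≠ 0 and ν = (ν₁, ν₂) ∈ ℝ × ℝ^{j−1}: the system H_j y = β e₁ + c ν has a solution y ∈ ℝ^j for some c ∈ ℝ if and only if either h₁ⱼ − h₁₁ᵀH₂₁⁻¹h₂₂ ≠ 0 or ν₁ − h₁₁ᵀ H₂₁⁻¹ ν₂ ≠ 0. -/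
open Matrix

theorem stmt13 (m : ℕ) (H : Matrix (Fin (m + 1)) (Fin (m + 1)) ℝ)
    (h11 h22 : Fin m → ℝ) (h1j : ℝ) (H21 : Matrix (Fin m) (Fin m) ℝ)
    (hH21 : IsUnit H21)
    (hrow0 : ∀ k : Fin m, H 0 k.castSucc = h11 k)
    (hrow0last : H 0 (Fin.last m) = h1j)
    (hblock : ∀ i k : Fin m, H i.succ k.castSucc = H21 i k)
    (hlastcol : ∀ i : Fin m, H i.succ (Fin.last m) = h22 i)
    (β : ℝ) (hβ : β ≠ 0) (ν1 : ℝ) (ν2 : Fin m → ℝ) :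
    (∃ c : ℝ, ∃ y : Fin (m + 1) → ℝ,
        H.mulVec y = β • (Pi.single (0 : Fin (m + 1)) (1 : ℝ) : Fin (m + 1) → ℝ) + c • (Fin.cons ν1 ν2 : Fin (m + 1) → ℝ)) ↔
      (h1j - h11 ⬝ᵥ H21⁻¹.mulVec h22 ≠ 0 ∨ ν1 - h11 ⬝ᵥ H21⁻¹.mulVec ν2 ≠ 0) := by
  have hdet : IsUnit H21.det := (Matrix.isUnit_iff_isUnit_det H21).mp hH21
  have hinv : H21⁻¹ * H21 = 1 := Matrix.nonsing_inv_mul H21 hdet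
  have hinv' : H21 * H21⁻¹ = 1 := Matrix.mul_nonsing_inv H21 hdet
  have key : ∀ c t : ℝ,
      (h1j - h11 ⬝ᵥ H21⁻¹.mulVec h22) * t = β + c * (ν1 - h11 ⬝ᵥ H21⁻¹.mulVec ν2) →
      ∃ y : Fin (m + 1) → ℝ, H.mulVec y =
        β • (Pi.single (0 : Fin (m+1)) (1:ℝ) : Fin (m+1) → ℝ) + c • (Fin.cons ν1 ν2 : Fin (m+1) → ℝ) := by
    intro c t hct
    refine ⟨Fin.snoc (H21⁻¹.mulVec (c • ν2 - t • h22)) t, ?_⟩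
    funext i
    induction i using Fin.cases with
    | zero =>
      simp only [Matrix.mulVec, dotProduct, Pi.add_apply, Pi.smul_apply,
        Fin.cons_zero, Pi.single_eq_same, smul_eq_mul, mul_one]
      rw [Fin.sum_univ_castSucc]
      simp only [Fin.snoc_castSucc, Fin.snoc_last, hrow0, hrow0last]
      have hd : ∑ k : Fin m, h11 k * (H21⁻¹.mulVec (c • ν2 - t • h22)) k
          = h11 ⬝ᵥ H21⁻¹.mulVec (c • ν2 - t • h22) := rfl
      rw [hd, Matrix.mulVec_sub, Matrix.mulVec_smul, Matrix.mulVec_smul,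
        dotProduct_sub, dotProduct_smul, dotProduct_smul]
      simp only [smul_eq_mul]
      nlinarith [hct]
    | succ j =>
      simp only [Matrix.mulVec, dotProduct, Pi.add_apply, Pi.smul_apply,
        Fin.cons_succ, smul_eq_mul]
      rw [Fin.sum_univ_castSucc]
      simp only [Fin.snoc_castSucc, Fin.snoc_last, hblock, hlastcol]
      have hmv : ∑ k : Fin m, H21 j k * (H21⁻¹.mulVec (c • ν2 - t • h22)) k
          = (H21.mulVec (H21⁻¹.mulVec (c • ν2 - t • h22))) j := rfl
      rw [hmv, Matrix.mulVec_mulVec, hinv', Matrix.one_mulVec]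
      rw [Pi.single_eq_of_ne (Fin.succ_ne_zero j)]
      simp only [Pi.sub_apply, Pi.smul_apply, smul_eq_mul]
      ring
  constructor
  · rintro ⟨c, y, hy⟩
    by_contra hcon
    push_neg at hcon
    obtain ⟨ha0, hb0⟩ := hcon
    set y' : Fin m → ℝ := fun k => y k.castSucc with hy'
    set t : ℝ := y (Fin.last m) with ht
    have hrow : ∀ j : Fin m, H21.mulVec y' j + h22 j * t = c * ν2 j := by
      intro j
      have hj := congrFun hy j.succ
      simp only [Matrix.mulVec, dotProduct, Pi.add_apply, Pi.smul_apply,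
        Fin.cons_succ, smul_eq_mul] at hj
      rw [Fin.sum_univ_castSucc] at hj
      simp only [hblock, hlastcol] at hj
      rw [Pi.single_eq_of_ne (Fin.succ_ne_zero j)] at hj
      simpa [Matrix.mulVec, dotProduct, y', t] using hj
    have hy'eq : y' = H21⁻¹.mulVec (c • ν2 - t • h22) := by
      have h1 : H21.mulVec y' = c • ν2 - t • h22 := by
        funext j
        have hj := hrow j
        simp only [Pi.sub_apply, Pi.smul_apply, smul_eq_mul]
        linarith
      calc y' = (H21⁻¹ * H21).mulVec y' := by rw [hinv, Matrix.one_mulVec]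
        _ = H21⁻¹.mulVec (H21.mulVec y') := (Matrix.mulVec_mulVec _ _ _).symm
        _ = _ := by rw [h1]
    have h0 : h11 ⬝ᵥ y' + h1j * t = β + c * ν1 := by
      have h0' := congrFun hy 0
      simp only [Matrix.mulVec, dotProduct, Pi.add_apply, Pi.smul_apply,
        Fin.cons_zero, Pi.single_eq_same, smul_eq_mul, mul_one] at h0'
      rw [Fin.sum_univ_castSucc] at h0'
      simp only [hrow0, hrow0last] at h0'
      simpa [dotProduct, y', t] using h0'
    rw [hy'eq, Matrix.mulVec_sub, Matrix.mulVec_smul, Matrix.mulVec_smul,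
      dotProduct_sub, dotProduct_smul, dotProduct_smul] at h0
    simp only [smul_eq_mul] at h0
    have hX : h11 ⬝ᵥ H21⁻¹.mulVec h22 = h1j := by linarith
    have hY : h11 ⬝ᵥ H21⁻¹.mulVec ν2 = ν1 := by linarith
    rw [hX, hY] at h0
    exact hβ (by linarith)
  · rintro (hA | hB)
    · refine ⟨0, key 0 (β / (h1j - h11 ⬝ᵥ H21⁻¹.mulVec h22)) ?_⟩
      rw [zero_mul, add_zero, mul_comm, div_mul_cancel₀ β hA]
    · refine ⟨-β / (ν1 - h11 ⬝ᵥ H21⁻¹.mulVec ν2), key _ 0 ?_⟩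
      rw [mul_zero, div_mul_cancel₀ _ hB]
      ring
end

section
/- Let V ∈ ℝ^{r×j} with rank V = j−1 and dim N(V) = 1, spanned by ν ≠ 0. Let A₁₁ ∈ ℝ^{r×r} be nonsingular and H ∈ ℝ^{j×j} singular with A₁₁V = VH and with Hessenberg subdiagonal entries nonzero. If ν lies in the column span of the first j−1 columns of H, i.e., ν = H [I_{j−1}; 0ᵀ] s with s ≠ 0, then the first j−1 columns of V are linearly dependent, so rank of the matrix of the first j−1 columns of V equals j−2. -/
open Matrix

theorem stmt15 (r m : ℕ)
    (V : Matrix (Fin r) (Fin (m + 1)) ℝ) (hrankV : V.rank = m)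
    (ν : Fin (m + 1) → ℝ) (hν : ν ≠ 0)
    (hker : LinearMap.ker V.mulVecLin = Submodule.span ℝ {ν})
    (A11 : Matrix (Fin r) (Fin r) ℝ) (hA11 : IsUnit A11)
    (H : Matrix (Fin (m + 1)) (Fin (m + 1)) ℝ) (hH : ¬ IsUnit H)
    (hAV : A11 * V = V * H)
    (hsub : ∀ i k : Fin (m + 1), (i : ℕ) = (k : ℕ) + 1 → H i k ≠ 0)
    (hhess : ∀ i k : Fin (m + 1), (k : ℕ) + 1 < (i : ℕ) → H i k = 0)
    (s : Fin m → ℝ) (hs : s ≠ 0)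
    (hνs : ν = H.mulVec (Fin.snoc s 0)) :
    (V.submatrix id Fin.castSucc).rank = m - 1 := by
  set x : Fin (m+1) → ℝ := Fin.snoc s 0 with hxdef
  set W := V.submatrix id Fin.castSucc with hWdef
  have hglue : ∀ t : Fin m → ℝ, W.mulVec t = V.mulVec (Fin.snoc t 0) := by
    intro t; funext i
    simp [Matrix.mulVec, dotProduct, Fin.sum_univ_castSucc, hWdef]
  have hν0 : V.mulVec ν = 0 := by
    have h1 : ν ∈ LinearMap.ker V.mulVecLin := by
      rw [hker]; exact Submodule.mem_span_singleton_self ν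
    simpa using h1
  have hVx : V.mulVec x = 0 := by
    have h1 : A11.mulVec (V.mulVec x) = 0 := by
      rw [Matrix.mulVec_mulVec, hAV, ← Matrix.mulVec_mulVec, ← hνs, hν0]
    have h2 : (A11⁻¹ * A11 * V) *ᵥ x = 0 := by
      rw [Matrix.mul_assoc, ← Matrix.mulVec_mulVec, ← Matrix.mulVec_mulVec, h1,
        Matrix.mulVec_zero]
    rwa [Matrix.nonsing_inv_mul A11 ((Matrix.isUnit_iff_isUnit_det A11).mp hA11),
      Matrix.one_mul] at h2
  have hxne : x ≠ 0 := by
    intro h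
    apply hs
    funext i
    have := congrFun h (Fin.castSucc i)
    simpa [hxdef, Fin.snoc_castSucc] using this
  -- ker V = span {x}
  have hxk : x ∈ Submodule.span ℝ {ν} := by
    rw [← hker]; simpa using hVx
  obtain ⟨c, hc⟩ := Submodule.mem_span_singleton.mp hxk
  have hcne : c ≠ 0 := by
    rintro rfl; simp at hc; exact hxne hc.symm
  have hker' : LinearMap.ker V.mulVecLin = Submodule.span ℝ {x} := by
    rw [hker, ← hc, Submodule.span_singleton_smul_eq (IsUnit.mk0 c hcne) ν]
  -- ker W = span {s}
  have hkerW : LinearMap.ker W.mulVecLin = Submodule.span ℝ {s} := by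
    ext t
    simp only [LinearMap.mem_ker, Matrix.mulVecLin_apply]
    constructor
    · intro ht
      have : Fin.snoc t 0 ∈ LinearMap.ker V.mulVecLin := by
        simpa [hglue t] using ht
      rw [hker'] at this
      obtain ⟨a, ha⟩ := Submodule.mem_span_singleton.mp this
      refine Submodule.mem_span_singleton.mpr ⟨a, ?_⟩
      funext i
      have := congrFun ha (Fin.castSucc i)
      simpa [hxdef, Fin.snoc_castSucc] using this
    · intro ht
      obtain ⟨a, ha⟩ := Submodule.mem_span_singleton.mp ht
      have hsnoc : Fin.snoc t 0 = a • x := by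
        funext i
        refine Fin.lastCases ?_ ?_ i
        · simp [hxdef]
        · intro i
          have := congrFun ha i
          simp [hxdef, Fin.snoc_castSucc] at this ⊢
          exact this.symm
      rw [hglue t, hsnoc]
      have := congrArg (fun y => a • y) hVx
      simpa [Matrix.mulVec_smul] using this
  -- finish via rank-nullity
  have h1 : W.rank + Module.finrank ℝ (LinearMap.ker W.mulVecLin) = m := by
    have := LinearMap.finrank_range_add_finrank_ker W.mulVecLin
    simpa [Matrix.rank] using this
  rw [hkerW, finrank_span_singleton hs] at h1
  omega
end

section
/- Let A₁₁ ∈ ℝ^{r×r} be nonsingular and suppose A₁₁ V_ℓ = V_{ℓ+1} H̄_ℓ where V_{ℓ+1} ∈ ℝ^{r×(ℓ+1)} has rank ℓ, V_ℓ consists of the first ℓ columns of V_{ℓ+1}, and H̄_ℓ ∈ ℝ^{(ℓ+1)×ℓ} is upper Hessenberg with nonzero subdiagonal entries. If there exists nonzero ν ∈ N(V_{ℓ+1}) lying in the column space of H̄_ℓ, then rank V_ℓ = ℓ−1. -/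
open Matrix

private lemma snocLinear_aux (l : ℕ) :
    ∃ e : (Fin l → ℝ) →ₗ[ℝ] (Fin (l + 1) → ℝ),
      ∀ y, e y = Fin.snoc y 0 := by
  refine ⟨{ toFun := fun y => Fin.snoc y 0, map_add' := ?_, map_smul' := ?_ }, fun y => rfl⟩
  · intro y z
    funext i
    refine Fin.lastCases ?_ (fun j => ?_) i <;> simp
  · intro c y
    funext i
    refine Fin.lastCases ?_ (fun j => ?_) i <;> simp

theorem stmt16 (r l : ℕ)
    (A11 : Matrix (Fin r) (Fin r) ℝ) (hA11 : IsUnit A11)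
    (V : Matrix (Fin r) (Fin (l + 1)) ℝ) (hV : V.rank = l)
    (Hbar : Matrix (Fin (l + 1)) (Fin l) ℝ)
    (hhess : ∀ (i : Fin (l + 1)) (k : Fin l), (k : ℕ) + 1 < (i : ℕ) → Hbar i k = 0)
    (hsub : ∀ (i : Fin (l + 1)) (k : Fin l), (i : ℕ) = (k : ℕ) + 1 → Hbar i k ≠ 0)
    (hAV : A11 * V.submatrix id Fin.castSucc = V * Hbar)
    (ν : Fin (l + 1) → ℝ) (hν : ν ≠ 0) (hνker : V.mulVec ν = 0)
    (hνrange : ν ∈ LinearMap.range Hbar.mulVecLin) :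
    (V.submatrix id Fin.castSucc).rank = l - 1 := by
  classical
  set W := V.submatrix id Fin.castSucc with hWdef
  -- key identity: multiplying W by y is multiplying V by (snoc y 0)
  have key : ∀ y : Fin l → ℝ, V.mulVec (Fin.snoc y 0) = W.mulVec y := by
    intro y
    funext j
    simp only [Matrix.mulVec, dotProduct, hWdef, Matrix.submatrix_apply, id_eq]
    rw [Fin.sum_univ_castSucc]
    simp [Fin.snoc_castSucc, Fin.snoc_last]
  -- get x with Hbar x = ν
  obtain ⟨x, hx⟩ := hνrange
  rw [Matrix.mulVecLin_apply] at hx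
  have hxne : x ≠ 0 := by
    rintro rfl
    exact hν (by rw [← hx, Matrix.mulVec_zero])
  -- W x = 0
  have hWx : W.mulVec x = 0 := by
    have h1 : A11.mulVec (W.mulVec x) = 0 := by
      rw [Matrix.mulVec_mulVec, hAV, ← Matrix.mulVec_mulVec, hx, hνker]
    obtain ⟨u, hu⟩ := hA11
    have : ((↑u⁻¹ : Matrix (Fin r) (Fin r) ℝ) * A11).mulVec (W.mulVec x) = 0 := by
      rw [← Matrix.mulVec_mulVec, h1, Matrix.mulVec_zero]
    rwa [← hu, Units.inv_mul, Matrix.one_mulVec] at this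
  -- dim ker V = 1
  have hrV : V.rank + Module.finrank ℝ (LinearMap.ker V.mulVecLin) = l + 1 := by
    have := LinearMap.finrank_range_add_finrank_ker V.mulVecLin
    simpa [Matrix.rank, Fintype.card_fin] using this
  have hkerV : Module.finrank ℝ (LinearMap.ker V.mulVecLin) = 1 := by omega
  -- embedding of ker W into ker V
  obtain ⟨e, he⟩ := snocLinear_aux l
  have hmem : ∀ y ∈ LinearMap.ker W.mulVecLin, e y ∈ LinearMap.ker V.mulVecLin := by
    intro y hy
    rw [LinearMap.mem_ker, Matrix.mulVecLin_apply, he, key]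
    exact hy
  have hinj : Function.Injective (e.restrict hmem) := by
    intro y z h
    ext i
    have h2 : e (y : Fin l → ℝ) = e (z : Fin l → ℝ) := by
      simpa [LinearMap.restrict_apply, Subtype.ext_iff] using h
    rw [he, he] at h2
    have := congrFun h2 (Fin.castSucc i)
    simpa [Fin.snoc_castSucc] using this
  have hle : Module.finrank ℝ (LinearMap.ker W.mulVecLin) ≤
      Module.finrank ℝ (LinearMap.ker V.mulVecLin) :=
    LinearMap.finrank_le_finrank_of_injective hinj
  -- ker W nontrivial
  have hpos : Module.finrank ℝ (LinearMap.ker W.mulVecLin) ≠ 0 := by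
    intro h0
    have hbot : LinearMap.ker W.mulVecLin = ⊥ := Submodule.finrank_eq_zero.mp h0
    have hxmem : x ∈ LinearMap.ker W.mulVecLin := by
      rw [LinearMap.mem_ker, Matrix.mulVecLin_apply]; exact hWx
    rw [hbot, Submodule.mem_bot] at hxmem
    exact hxne hxmem
  have hkerW : Module.finrank ℝ (LinearMap.ker W.mulVecLin) = 1 := by omega
  -- rank-nullity for W
  have hrW : W.rank + Module.finrank ℝ (LinearMap.ker W.mulVecLin) = l := by
    have := LinearMap.finrank_range_add_finrank_ker W.mulVecLin
    simpa [Matrix.rank, Fintype.card_fin] using this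
  omega
end

section
/- Let H̄_ℓ ∈ ℝ^{(ℓ+1)×ℓ} with first row h₁₁ᵀ and invertible lower block H₂₁ ∈ ℝ^{ℓ×ℓ}, and let β ≠ 0, ν = (ν₁, ν₂) ∈ ℝ^{ℓ+1}. Then there exist y ∈ ℝ^ℓ and c ∈ ℝ with β e₁ − H̄_ℓ y = c ν if and only if ν₁ − h₁₁ᵀ H₂₁⁻¹ ν₂ ≠ 0. -/
open Matrix

theorem stmt18 (l : ℕ) (h11 : Fin l → ℝ) (H21 : Matrix (Fin l) (Fin l) ℝ)
    (hH21 : IsUnit H21) (β : ℝ) (hβ : β ≠ 0)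
    (ν1 : ℝ) (ν2 : Fin l → ℝ) :
    (∃ y : Fin l → ℝ, ∃ c : ℝ,
        β • (Pi.single (0 : Fin (l + 1)) (1 : ℝ) : Fin (l + 1) → ℝ) -
          (Matrix.of (Fin.cons h11 (fun i => H21 i)) :
              Matrix (Fin (l + 1)) (Fin l) ℝ).mulVec y
          = c • (Fin.cons ν1 ν2 : Fin (l + 1) → ℝ)) ↔
      ν1 - h11 ⬝ᵥ H21⁻¹.mulVec ν2 ≠ 0 := by
  have hdet : IsUnit H21.det := (Matrix.isUnit_iff_isUnit_det H21).mp hH21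
  have hinv : H21⁻¹ * H21 = 1 := Matrix.nonsing_inv_mul H21 hdet
  constructor
  · rintro ⟨y, c, hyc⟩ hcontra
    -- rows i.succ : - H21 i ⬝ y = c * ν2 i
    have hrow : ∀ i : Fin l, H21.mulVec y i = (-c) * ν2 i := by
      intro i
      have := congrFun hyc i.succ
      simp [Matrix.mulVec, Pi.single_eq_of_ne (Fin.succ_ne_zero i)] at this
      simpa [Matrix.mulVec] using by linarith [this]
    have hy : y = (-c) • H21⁻¹.mulVec ν2 := by
      have : H21.mulVec y = (-c) • ν2 := funext fun i => by
        simpa using hrow i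
      calc y = (H21⁻¹ * H21).mulVec y := by simp [hinv]
        _ = H21⁻¹.mulVec (H21.mulVec y) := (Matrix.mulVec_mulVec _ _ _).symm
        _ = (-c) • H21⁻¹.mulVec ν2 := by rw [this, Matrix.mulVec_smul]
    -- row 0 : β - h11 ⬝ y = c * ν1
    have hrow0 := congrFun hyc 0
    simp [Matrix.mulVec] at hrow0
    have hd : h11 ⬝ᵥ y = -c * (h11 ⬝ᵥ H21⁻¹.mulVec ν2) := by
      rw [hy]; simp [dotProduct_smul]
    have hnu : ν1 = h11 ⬝ᵥ H21⁻¹.mulVec ν2 := by linarith [hcontra]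
    rw [hnu] at hrow0
    simp [dotProduct] at hd hrow0
    apply hβ
    nlinarith [hd, hrow0]
  · intro hne
    set d := ν1 - h11 ⬝ᵥ H21⁻¹.mulVec ν2 with hd
    refine ⟨(-(β/d)) • H21⁻¹.mulVec ν2, β/d, ?_⟩
    funext j
    refine Fin.cases ?_ ?_ j
    · have hrow0 : (Matrix.of (Fin.cons h11 (fun i => H21 i)) :
          Matrix (Fin (l + 1)) (Fin l) ℝ).mulVec ((-(β/d)) • H21⁻¹.mulVec ν2) 0
          = (-(β/d)) * (h11 ⬝ᵥ H21⁻¹.mulVec ν2) := by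
        simp [Matrix.mulVec, dotProduct_smul]
      simp only [Pi.sub_apply, Pi.smul_apply, Pi.single_eq_same, hrow0, Fin.cons_zero,
        smul_eq_mul, mul_one]
      have hdX : h11 ⬝ᵥ H21⁻¹.mulVec ν2 = ν1 - d := by rw [hd]; ring
      rw [hdX]
      field_simp
      ring
    · intro i
      have hrowi : (Matrix.of (Fin.cons h11 (fun i => H21 i)) :
          Matrix (Fin (l + 1)) (Fin l) ℝ).mulVec ((-(β/d)) • H21⁻¹.mulVec ν2) i.succ
          = (-(β/d)) * (H21.mulVec (H21⁻¹.mulVec ν2)) i := by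
        simp [Matrix.mulVec, dotProduct_smul]
      have hvv : H21.mulVec (H21⁻¹.mulVec ν2) = ν2 := by
        rw [Matrix.mulVec_mulVec, Matrix.mul_nonsing_inv H21 hdet, Matrix.one_mulVec]
      rw [hvv] at hrowi
      simp only [Pi.sub_apply, Pi.smul_apply,
        Pi.single_eq_of_ne (Fin.succ_ne_zero i), hrowi, Fin.cons_succ,
        smul_eq_mul, mul_zero]
      ring
end

section
/- Let A ∈ ℝ^{n×n} with R(A) = R(Aᵀ). Then for every b, x₀ ∈ ℝⁿ, GMRES applied to min ‖b − Ax‖₂ with initial guess x₀ determines a least squares solution within at most rank(A) + 1 iterations (in exact arithmetic), i.e., there exists k ≤ rank(A)+1 and x_k ∈ x₀ + span{r₀, Ar₀, …, A^{k−1} r₀} (r₀ = b − Ax₀) such that ‖b − Ax_k‖₂ = min over x ∈ ℝⁿ of ‖b − Ax‖₂. -/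
open Matrix

/-- Under range symmetry, the kernel of `A` is contained in the kernel of `Aᵀ`. -/
lemma stmt19_kerT (n : ℕ) (A : Matrix (Fin n) (Fin n) ℝ)
    (hrange : LinearMap.range A.mulVecLin = LinearMap.range Aᵀ.mulVecLin)
    {v : Fin n → ℝ} (hv : A *ᵥ v = 0) : Aᵀ *ᵥ v = 0 := by
  have horth : ∀ w ∈ LinearMap.range A.mulVecLin, v ⬝ᵥ w = 0 := by
    intro w hw
    rw [hrange] at hw
    obtain ⟨u, rfl⟩ := hw
    rw [mulVecLin_apply, dotProduct_mulVec, vecMul_transpose, hv, zero_dotProduct]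
  have h1 : (Aᵀ *ᵥ v) ⬝ᵥ (Aᵀ *ᵥ v) = v ⬝ᵥ (A *ᵥ (Aᵀ *ᵥ v)) := by
    nth_rewrite 1 [mulVec_transpose]
    rw [← dotProduct_mulVec]
  exact dotProduct_self_eq_zero.mp (h1.trans (horth _ ⟨Aᵀ *ᵥ v, rfl⟩))

/-- Under range symmetry, `A` is injective on its range. -/
lemma stmt19_injR (n : ℕ) (A : Matrix (Fin n) (Fin n) ℝ)
    (hrange : LinearMap.range A.mulVecLin = LinearMap.range Aᵀ.mulVecLin)
    {v : Fin n → ℝ} (hvr : v ∈ LinearMap.range A.mulVecLin) (hv : A *ᵥ v = 0) : v = 0 := by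
  rw [hrange] at hvr
  obtain ⟨u, rfl⟩ := hvr
  rw [mulVecLin_apply] at hv ⊢
  apply dotProduct_self_eq_zero.mp
  nth_rewrite 1 [mulVec_transpose]
  rw [← dotProduct_mulVec, hv, dotProduct_zero]

theorem stmt19 (n : ℕ) (A : Matrix (Fin n) (Fin n) ℝ)
    (hrange : LinearMap.range A.mulVecLin = LinearMap.range Aᵀ.mulVecLin)
    (b x0 : Fin n → ℝ) :
    ∃ k ≤ A.rank + 1, ∃ x : Fin n → ℝ,
      x - x0 ∈ Submodule.span ℝ
        {v : Fin n → ℝ | ∃ i < k, v = (A ^ i).mulVec (b - A.mulVec x0)} ∧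
      ∀ y : Fin n → ℝ,
        (∑ a, (b - A.mulVec x) a ^ 2) ≤ ∑ a, (b - A.mulVec y) a ^ 2 := by
  classical
  set r0 : Fin n → ℝ := b - A.mulVec x0 with hr0
  set f : (Fin n → ℝ) →ₗ[ℝ] (Fin n → ℝ) := A.mulVecLin with hf
  -- Krylov subspaces
  set K : ℕ → Submodule ℝ (Fin n → ℝ) :=
    fun j => Submodule.span ℝ {v : Fin n → ℝ | ∃ i < j, v = (A ^ i).mulVec r0} with hK
  set Kinf : Submodule ℝ (Fin n → ℝ) :=
    Submodule.span ℝ (Set.range fun i : ℕ => (A ^ i).mulVec r0) with hKinf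
  have hpow : ∀ i : ℕ, (A ^ (i + 1)) *ᵥ r0 = A *ᵥ ((A ^ i) *ᵥ r0) := by
    intro i
    rw [mulVec_mulVec, ← pow_succ']
  -- monotonicity
  have hmono : ∀ {i j : ℕ}, i ≤ j → K i ≤ K j := by
    intro i j hij
    apply Submodule.span_mono
    rintro v ⟨i', hi', rfl⟩
    exact ⟨i', lt_of_lt_of_le hi' hij, rfl⟩
  -- A maps K j into K (j+1)
  have hmem : ∀ (j : ℕ) (v : Fin n → ℝ), v ∈ K j → A *ᵥ v ∈ K (j + 1) := by
    intro j v hv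
    have : Submodule.map f (K j) ≤ K (j + 1) := by
      rw [hK]
      rw [Submodule.map_span]
      apply Submodule.span_mono
      rintro w ⟨v', ⟨i, hi, rfl⟩, rfl⟩
      exact ⟨i + 1, by omega, by rw [hf, mulVecLin_apply, hpow]⟩
    exact this ⟨v, hv, rfl⟩
  -- one step of stabilization
  have hsucc : ∀ j : ℕ, K j = K (j + 1) → K (j + 1) = K (j + 2) := by
    intro j hj
    refine le_antisymm (hmono (by omega)) ?_
    rw [hK]
    apply Submodule.span_le.mpr
    rintro v ⟨i, hi, rfl⟩
    rcases Nat.lt_or_ge i (j + 1) with h | h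
    · exact Submodule.subset_span ⟨i, h, rfl⟩
    · have hij : i = j + 1 := by omega
      subst hij
      rw [hpow]
      apply hmem
      rw [hj]
      exact Submodule.subset_span ⟨j, by omega, rfl⟩
  -- stabilization propagates
  have hstab : ∀ j : ℕ, K j = K (j + 1) → ∀ m : ℕ, K (j + m) = K j := by
    intro j hj
    have hcons : ∀ m : ℕ, K (j + m) = K (j + m + 1) := by
      intro m
      induction m with
      | zero => exact hj
      | succ m ih => exact hsucc (j + m) ih
    intro m
    induction m with
    | zero => rfl
    | succ m ih => rw [← ih, show j + (m + 1) = j + m + 1 by omega, ← hcons m]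
  -- dimension bound
  have hbound : ∀ j : ℕ, Module.finrank ℝ (K j) ≤ A.rank + 1 := by
    intro j
    have hle : K j ≤ (Submodule.span ℝ {r0}) ⊔ LinearMap.range f := by
      apply Submodule.span_le.mpr
      rintro v ⟨i, _, rfl⟩
      cases i with
      | zero =>
        apply Submodule.mem_sup_left
        rw [pow_zero, one_mulVec]
        exact Submodule.subset_span rfl
      | succ i =>
        apply Submodule.mem_sup_right
        rw [hpow]
        exact ⟨(A ^ i) *ᵥ r0, rfl⟩
    calc Module.finrank ℝ (K j)
        ≤ Module.finrank ℝ ((Submodule.span ℝ {r0}) ⊔ LinearMap.range f : Submodule ℝ (Fin n → ℝ)) :=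
          Submodule.finrank_mono hle
      _ ≤ Module.finrank ℝ (Submodule.span ℝ {r0}) + Module.finrank ℝ (LinearMap.range f) :=
          Submodule.finrank_add_le_finrank_add_finrank _ _
      _ ≤ 1 + A.rank := by
          have h1 : Module.finrank ℝ (Submodule.span ℝ ({r0} : Set (Fin n → ℝ))) ≤ 1 := by
            by_cases hz : r0 = 0
            · rw [show Submodule.span ℝ ({r0} : Set (Fin n → ℝ)) = ⊥ from
                Submodule.span_singleton_eq_bot.mpr hz, finrank_bot]
              omega
            · exact le_of_eq (finrank_span_singleton hz)
          have h2 : Module.finrank ℝ (LinearMap.range f) = A.rank := rfl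
          omega
      _ = A.rank + 1 := by omega
  -- there is a stabilization index ≤ rank + 1
  have hexj : ∃ j ≤ A.rank + 1, K j = K (j + 1) := by
    by_contra hcon
    push_neg at hcon
    have hgrow : ∀ j : ℕ, j ≤ A.rank + 2 → j ≤ Module.finrank ℝ (K j) := by
      intro j
      induction j with
      | zero => intro _; omega
      | succ j ih =>
        intro hj
        have hlt : K j < K (j + 1) :=
          lt_of_le_of_ne (hmono (by omega)) (hcon j (by omega))
        have := Submodule.finrank_lt_finrank_of_lt hlt
        have := ih (by omega)
        omega
    have := hgrow (A.rank + 2) (le_refl _)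
    have := hbound (A.rank + 2)
    omega
  obtain ⟨j, hjle, hjeq⟩ := hexj
  -- Kinf is contained in K (rank + 1)
  have hKinfle : Kinf ≤ K (A.rank + 1) := by
    apply Submodule.span_le.mpr
    rintro v ⟨i, rfl⟩
    have hmemKi : (A ^ i) *ᵥ r0 ∈ K (i + 1) :=
      Submodule.subset_span ⟨i, by omega, rfl⟩
    rcases le_or_gt (i + 1) (A.rank + 1) with h | h
    · exact hmono h hmemKi
    · have : K (i + 1) = K j := by
        have : i + 1 = j + (i + 1 - j) := by omega
        rw [this]
        exact hstab j hjeq _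
      rw [this] at hmemKi
      exact hmono hjle hmemKi
  -- W = A(Kinf)
  set W : Submodule ℝ (Fin n → ℝ) := Submodule.map f Kinf with hW
  have hWKinf : W ≤ Kinf := by
    rw [hW, hKinf, Submodule.map_span]
    apply Submodule.span_mono
    rintro w ⟨v, ⟨i, rfl⟩, rfl⟩
    exact ⟨i + 1, by dsimp only; rw [hf, mulVecLin_apply]; exact hpow i⟩
  have hWrange : W ≤ LinearMap.range f := LinearMap.map_le_range
  -- A(W) = W
  have hfW : Submodule.map f W = W := by
    have hle : Submodule.map f W ≤ W := by
      calc Submodule.map f W ≤ Submodule.map f Kinf := Submodule.map_mono hWKinf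
        _ = W := rfl
    apply Submodule.eq_of_le_of_finrank_le hle
    -- rank-nullity on the restriction of f to W
    have hker : LinearMap.ker (f.domRestrict W) = ⊥ := by
      rw [LinearMap.ker_eq_bot']
      rintro ⟨w, hw⟩ hfw
      have hfw' : A *ᵥ w = 0 := by
        rwa [LinearMap.domRestrict_apply, hf, mulVecLin_apply] at hfw
      have : w = 0 := stmt19_injR n A hrange (hWrange hw) hfw'
      exact Subtype.ext this
    have hrn := LinearMap.finrank_range_add_finrank_ker (f.domRestrict W)
    rw [hker, LinearMap.range_domRestrict] at hrn
    simp only [finrank_bot, add_zero] at hrn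
    omega
  -- find ζ ∈ Kinf with A (A ζ) = A r0
  have hr0K : r0 ∈ Kinf := by
    apply Submodule.subset_span
    exact ⟨0, by simp⟩
  have hAr0W : A *ᵥ r0 ∈ W := ⟨r0, hr0K, by rw [hf, mulVecLin_apply]⟩
  rw [← hfW] at hAr0W
  obtain ⟨w, hwW, hfw⟩ := hAr0W
  obtain ⟨z, hzK, hfz⟩ := hwW
  rw [hf, mulVecLin_apply] at hfw hfz
  -- the residual
  set x : Fin n → ℝ := x0 + z with hx
  have hxz : x - x0 = z := by rw [hx]; abel
  set ρ : Fin n → ℝ := b - A *ᵥ x with hρ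
  have hρr0 : ρ = r0 - A *ᵥ z := by
    rw [hρ, hx, hr0, mulVec_add]
    abel
  have hAρ : A *ᵥ ρ = 0 := by
    rw [hρr0, mulVec_sub, hfz, hfw, sub_self]
  have hATρ : Aᵀ *ᵥ ρ = 0 := stmt19_kerT n A hrange hAρ
  refine ⟨A.rank + 1, le_refl _, x, ?_, ?_⟩
  · rw [hxz]
    exact hKinfle hzK
  · intro y
    have hdecomp : b - A *ᵥ y = ρ + A *ᵥ (x - y) := by
      rw [hρ, mulVec_sub]
      abel
    set d : Fin n → ℝ := A *ᵥ (x - y) with hd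
    have horth : ρ ⬝ᵥ d = 0 := by
      rw [hd, dotProduct_mulVec, ← mulVec_transpose, hATρ, zero_dotProduct]
    have hexp : ∑ a, (b - A *ᵥ y) a ^ 2
        = (∑ a, ρ a ^ 2) + 2 * (ρ ⬝ᵥ d) + ∑ a, d a ^ 2 := by
      rw [hdecomp]
      simp only [Pi.add_apply, dotProduct, Finset.mul_sum]
      rw [← Finset.sum_add_distrib, ← Finset.sum_add_distrib]
      apply Finset.sum_congr rfl
      intro a _
      ring
    have hdsq : (0 : ℝ) ≤ ∑ a, d a ^ 2 := Finset.sum_nonneg fun a _ => sq_nonneg _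
    rw [hexp, horth]
    simp only [mul_zero, add_zero]
    linarith
end
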